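/- There are no infinite chains of strictly more general first-order terms: the relation 'strictly more general than' (i.e., $t$ is an instance of $s$ under some substitution but $s$ is not an instance of $t$) is well-founded on terms. -/

import Mathlib

/-!
Instantiation never shrinks a term, and it preserves the size exactly when every variable is
sent to a term of size one, i.e. a variable or a constant. In that case each variable `y` of
`s σ` comes from a variable `x` of `s` with `σ x = y`; choosing such an `x` for every `y` gives
an injection from the variables of `s σ` into those of `s`. If it is onto, it is a renaming
taking `s σ` back to `s`. So a strict instance either is larger or has fewer distinct
variables, and the pair (size, size − number of variables) increases lexicographically.
-/

/-- First-order terms over a signature `F` indexed by arity, with variables. -/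
inductive Tm (F : ℕ → Type) : Type
  | var : ℕ → Tm F
  | app : (n : ℕ) → F n → (Fin n → Tm F) → Tm F

/-- Application of a substitution (a map from variables to terms) to a term. -/
def subst {F : ℕ → Type} (σ : ℕ → Tm F) : Tm F → Tm F
  | .var x => σ x
  | .app n f ts => .app n f (fun i => subst σ (ts i))

/-- `s` is more general than `t` iff `t` is an instance of `s`, i.e. `s θ = t`
for some substitution `θ`. -/
def MoreGeneral {F : ℕ → Type} (s t : Tm F) : Prop := ∃ σ, subst σ s = t

/-- `s` is strictly more general than `t`. -/
def StrictlyMoreGeneral {F : ℕ → Type} (s t : Tm F) : Prop :=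
  MoreGeneral s t ∧ ¬ MoreGeneral t s

namespace Tm

variable {F : ℕ → Type}

def size : Tm F → ℕ
  | var _ => 1
  | app _ _ ts => (∑ i, size (ts i)) + 1

def vars : Tm F → Finset ℕ
  | var x => {x}
  | app _ _ ts => Finset.univ.biUnion fun i => vars (ts i)

@[simp]
lemma mem_vars_app {n : ℕ} {f : F n} {ts : Fin n → Tm F} {y : ℕ} :
    y ∈ vars (app n f ts) ↔ ∃ i, y ∈ vars (ts i) := by
  simp [vars]

lemma size_pos (s : Tm F) : 0 < size s := by
  cases s <;> simp [size]

lemma card_vars_le_size (s : Tm F) : (vars s).card ≤ size s := by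
  induction s with
  | var x => simp [vars, size]
  | app n f ts ih =>
    calc (vars (app n f ts)).card
        ≤ ∑ i, (vars (ts i)).card := Finset.card_biUnion_le
      _ ≤ ∑ i, size (ts i) := Finset.sum_le_sum fun i _ => ih i
      _ ≤ size (app n f ts) := Nat.le_succ _

lemma eq_var_of_size_eq_one {u : Tm F} {y : ℕ} (h : size u = 1) (hy : y ∈ vars u) :
    u = var y := by
  cases u with
  | var x => simp_all [vars]
  | app n f ts =>
    obtain ⟨i, -⟩ := mem_vars_app.mp hy
    have : size (ts i) ≤ ∑ j, size (ts j) :=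
      Finset.single_le_sum (f := fun j => size (ts j)) (fun j _ => Nat.zero_le _) (Finset.mem_univ i)
    have := size_pos (ts i)
    simp only [size] at h
    omega

lemma size_le_size_subst (σ : ℕ → Tm F) (s : Tm F) : size s ≤ size (subst σ s) := by
  induction s with
  | var x => exact size_pos (σ x)
  | app n f ts ih =>
    simp only [size, subst]
    exact Nat.succ_le_succ (Finset.sum_le_sum fun i _ => ih i)

lemma size_eq_one_of_size_subst_eq {σ : ℕ → Tm F} {s : Tm F}
    (h : size (subst σ s) = size s) {x : ℕ} (hx : x ∈ vars s) : size (σ x) = 1 := by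
  induction s with
  | var y =>
    obtain rfl : x = y := Finset.mem_singleton.mp hx
    simpa [subst, size] using h
  | app n f ts ih =>
    obtain ⟨i, hi⟩ := mem_vars_app.mp hx
    simp only [size, subst, Nat.add_right_cancel_iff] at h
    have hle : ∀ j ∈ Finset.univ, size (ts j) ≤ size (subst σ (ts j)) :=
      fun j _ => size_le_size_subst σ (ts j)
    exact ih i ((Finset.sum_eq_sum_iff_of_le hle).mp h.symm i (Finset.mem_univ i)).symm hi

lemma mem_vars_subst {σ : ℕ → Tm F} {s : Tm F} {y : ℕ} :
    y ∈ vars (subst σ s) ↔ ∃ x ∈ vars s, y ∈ vars (σ x) := by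
  induction s with
  | var x => simp [subst, vars]
  | app n f ts ih =>
    simp only [subst, mem_vars_app, ih]
    constructor
    · rintro ⟨i, x, hx, hy⟩
      exact ⟨x, ⟨i, hx⟩, hy⟩
    · rintro ⟨x, ⟨i, hx⟩, hy⟩
      exact ⟨i, x, hx, hy⟩

lemma subst_subst (σ τ : ℕ → Tm F) (s : Tm F) :
    subst τ (subst σ s) = subst (fun x => subst τ (σ x)) s := by
  induction s with
  | var x => rfl
  | app n f ts ih => simp only [subst, ih]

lemma subst_congr {σ τ : ℕ → Tm F} {s : Tm F} (h : ∀ x ∈ vars s, σ x = τ x) :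
    subst σ s = subst τ s := by
  induction s with
  | var x => exact h x (Finset.mem_singleton_self x)
  | app n f ts ih =>
    simp only [subst]
    congr 1
    funext i
    exact ih i fun x hx => h x (mem_vars_app.mpr ⟨i, hx⟩)

lemma subst_var (s : Tm F) : subst var s = s := by
  induction s with
  | var x => rfl
  | app n f ts ih => simp only [subst, ih]

lemma card_vars_subst_lt_of_size_subst_eq {σ : ℕ → Tm F} {s : Tm F}
    (hsize : size (subst σ s) = size s) (hgen : ¬ MoreGeneral (subst σ s) s) :
    (vars (subst σ s)).card < (vars s).card := by
  set t := subst σ s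
  have hsrc : ∀ y ∈ vars t, ∃ x ∈ vars s, y ∈ vars (σ x) := fun y hy => mem_vars_subst.mp hy
  choose! g hg_mem hg_vars using hsrc
  have hσg : ∀ y ∈ vars t, σ (g y) = var y := fun y hy =>
    eq_var_of_size_eq_one (size_eq_one_of_size_subst_eq hsize (hg_mem y hy)) (hg_vars y hy)
  have hg_inj : ∀ y₁ ∈ vars t, ∀ y₂ ∈ vars t, g y₁ = g y₂ → y₁ = y₂ :=
    fun y₁ h₁ y₂ h₂ he => var.inj ((hσg y₁ h₁).symm.trans (he ▸ hσg y₂ h₂))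
  refine lt_of_le_of_ne (Finset.card_le_card_of_injOn g hg_mem hg_inj) fun hcard => hgen ?_
  have hg_surj : ∀ x ∈ vars s, ∃ y, ∃ _ : y ∈ vars t, x = g y :=
    Finset.surj_on_of_inj_on_of_card_le (fun y _ => g y) hg_mem
      (fun y₁ y₂ h₁ h₂ => hg_inj y₁ h₁ y₂ h₂) hcard.ge
  refine ⟨fun y => var (g y), ?_⟩
  rw [subst_subst]
  refine (subst_congr fun x hx => ?_).trans (subst_var s)
  obtain ⟨y, hy, rfl⟩ := hg_surj x hx
  rw [hσg y hy, subst]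

/-- By `card_vars_le_size` the subtraction is not truncated, so the second component grows
exactly as the number of distinct variables drops. -/
def complexity (t : Tm F) : ℕ ×ₗ ℕ := toLex (size t, size t - (vars t).card)

end Tm

open Tm in
lemma StrictlyMoreGeneral.complexity_lt {F : ℕ → Type} {s t : Tm F}
    (h : StrictlyMoreGeneral s t) : complexity s < complexity t := by
  obtain ⟨⟨σ, rfl⟩, hgen⟩ := h
  rw [complexity, complexity, Prod.Lex.toLex_lt_toLex]
  rcases (size_le_size_subst σ s).lt_or_eq with hlt | heq
  · exact Or.inl hlt
  · have hcard := card_vars_subst_lt_of_size_subst_eq heq.symm hgen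
    have := card_vars_le_size s
    refine Or.inr ⟨heq, ?_⟩
    simp only [← heq]
    omega

/-- there are no infinite chains of strictly more general terms:
the relation 'strictly more general than' is well-founded (Huet 1980). -/
theorem strictlyMoreGeneral_wf {F : ℕ → Type} :
    WellFounded (fun s t : Tm F => StrictlyMoreGeneral s t) :=
  Subrelation.wf (fun h => h.complexity_lt) (InvImage.wf Tm.complexity wellFounded_lt)
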